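/- Endow {0,?,1} with the total order 0 ≺ ? ≺ 1 and {0,?,1}^ℤ with the coordinatewise order. Let η, η̃ ∈ {0,?,1}^ℤ satisfy η(x) ⪯ η̃(x) for all x. Then for each n ∈ ℤ, the random variable F̂_{p,q}η(n) stochastically dominates F̂_{p,q}η̃(n) with respect to ≺; i.e., Prob[F̂η̃(n) ⪰ a] ≤ Prob[F̂η(n) ⪰ a] for each a ∈ {0,?,1}. -/

import Mathlib

open MeasureTheory

inductive PSym : Type
  | zero : PSym
  | quest : PSym
  | one : PSym
deriving DecidableEq

instance : Fintype PSym :=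
  ⟨{PSym.zero, PSym.quest, PSym.one}, fun x => by cases x <;> simp⟩

instance : MeasurableSpace PSym := ⊤

abbrev Config : Type := ℤ → PSym

open PSym

/-- the symbol lies in `{0, ?}` -/
def lowQ (a : PSym) : Prop := a = PSym.zero ∨ a = PSym.quest

instance : DecidablePred lowQ := fun a => by unfold lowQ; infer_instance

/-- the window `(η k, η (k+1))` lies in `{0,?}² \ {(0,0)}` -/
def star2 (η : Config) (k : ℤ) : Prop :=
  lowQ (η k) ∧ lowQ (η (k + 1)) ∧ ¬(η k = PSym.zero ∧ η (k + 1) = PSym.zero)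

/-- the window `(η k, η (k+1), η (k+2))` lies in `{0,?}³ \ {(0,0,0)}` -/
def star3 (η : Config) (k : ℤ) : Prop :=
  lowQ (η k) ∧ lowQ (η (k + 1)) ∧ lowQ (η (k + 2)) ∧
    ¬(η k = PSym.zero ∧ η (k + 1) = PSym.zero ∧ η (k + 2) = PSym.zero)

/-- translation by `k` -/
def shiftBy (k : ℤ) (η : Config) : Config := fun n => η (n + k)

/-- reflection -/
def reflect (η : Config) : Config := fun n => η (-n)

/-- the single-site stochastic update rule of the envelope PCA `F̂_{p,q}`:
`phi p q a b c d` is the probability that the output symbol is `d` when the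
neighbourhood reads `(a, b, c)`. -/
noncomputable def phi (p q : ℝ) (a b c d : PSym) : ℝ :=
  if a = PSym.zero ∧ b = PSym.zero ∧ c = PSym.zero then
    (if d = PSym.zero then p else if d = PSym.one then 1 - p else 0)
  else if lowQ a ∧ lowQ b ∧ lowQ c then
    (if d = PSym.zero then p else if d = PSym.one then q else 1 - p - q)
  else
    (if d = PSym.zero then 1 - q else if d = PSym.one then q else 0)

/-- the total order `0 ≺ ? ≺ 1` encoded via a rank function -/
def ordVal : PSym → ℕ
  | PSym.zero => 0
  | PSym.quest => 1
  | PSym.one => 2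

/-! The upper sets of `0 ≺ ? ≺ 1` are everything, `{?, 1}` and `{1}`. The first has mass one;
the second has mass `1 - φ(0)`, where `φ(0)` is `1 - q` if the window contains a `1` and `p`
otherwise; the third has mass `1 - p` on the all-zero window and `q` otherwise. Raising a window
can only leave the all-zero case or enter the contains-a-`1` case, so both tails can only
decrease, because `q ≤ 1 - p`, i.e. `p ≤ 1 - q`. -/

namespace PSym

lemma eq_zero_of_ordVal_le {x y : PSym} (h : ordVal x ≤ ordVal y) (hy : y = zero) : x = zero := by
  subst hy; cases x <;> simp_all [ordVal]

lemma eq_one_of_ordVal_le {x y : PSym} (h : ordVal x ≤ ordVal y) (hx : x = one) : y = one := by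
  subst hx; cases y <;> simp_all [ordVal]

lemma filter_ordVal_zero_le :
    Finset.univ.filter (fun e => ordVal zero ≤ ordVal e) = Finset.univ := by
  decide

lemma filter_ordVal_quest_le :
    Finset.univ.filter (fun e => ordVal quest ≤ ordVal e) = {quest, one} := by
  decide

lemma filter_ordVal_one_le : Finset.univ.filter (fun e => ordVal one ≤ ordVal e) = {one} := by
  decide

end PSym

open PSym

section

variable (p q : ℝ) (a b c : PSym)

lemma phi_zero_add_phi_quest_add_phi_one :
    phi p q a b c zero + phi p q a b c quest + phi p q a b c one = 1 := by
  cases a <;> cases b <;> cases c <;> simp [phi, lowQ] <;> ring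

lemma sum_phi : ∑ d, phi p q a b c d = 1 := by
  rw [← phi_zero_add_phi_quest_add_phi_one p q a b c,
    show (Finset.univ : Finset PSym) = {zero, quest, one} from rfl,
    Finset.sum_insert (by decide), Finset.sum_pair (by decide), add_assoc]

lemma phi_zero_eq : phi p q a b c zero = if a = one ∨ b = one ∨ c = one then 1 - q else p := by
  cases a <;> cases b <;> cases c <;> simp [phi, lowQ]

lemma phi_one_eq : phi p q a b c one = if a = zero ∧ b = zero ∧ c = zero then 1 - p else q := by
  cases a <;> cases b <;> cases c <;> simp [phi, lowQ]

end

section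

variable {p q : ℝ} {a b c a' b' c' : PSym}

lemma phi_one_antitone (hpq : p + q ≤ 1) (ha : ordVal a ≤ ordVal a')
    (hb : ordVal b ≤ ordVal b') (hc : ordVal c ≤ ordVal c') :
    phi p q a' b' c' one ≤ phi p q a b c one := by
  rw [phi_one_eq, phi_one_eq]
  split_ifs with h' h
  · exact le_rfl
  · exact absurd ⟨eq_zero_of_ordVal_le ha h'.1, eq_zero_of_ordVal_le hb h'.2.1,
      eq_zero_of_ordVal_le hc h'.2.2⟩ h
  · linarith
  · exact le_rfl

lemma phi_zero_monotone (hpq : p + q ≤ 1) (ha : ordVal a ≤ ordVal a')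
    (hb : ordVal b ≤ ordVal b') (hc : ordVal c ≤ ordVal c') :
    phi p q a b c zero ≤ phi p q a' b' c' zero := by
  rw [phi_zero_eq, phi_zero_eq]
  split_ifs with h h'
  · exact le_rfl
  · exact absurd (h.imp (eq_one_of_ordVal_le ha)
      (Or.imp (eq_one_of_ordVal_le hb) (eq_one_of_ordVal_le hc))) h'
  · linarith
  · exact le_rfl

lemma sum_phi_filter_ordVal_le_antitone (hpq : p + q ≤ 1) (ha : ordVal a ≤ ordVal a')
    (hb : ordVal b ≤ ordVal b') (hc : ordVal c ≤ ordVal c') (d : PSym) :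
    ∑ e ∈ Finset.univ.filter (fun e => ordVal d ≤ ordVal e), phi p q a' b' c' e ≤
      ∑ e ∈ Finset.univ.filter (fun e => ordVal d ≤ ordVal e), phi p q a b c e := by
  cases d
  case zero => simp only [filter_ordVal_zero_le, sum_phi, le_refl]
  case quest =>
    rw [filter_ordVal_quest_le, Finset.sum_pair (by decide), Finset.sum_pair (by decide)]
    linarith [phi_zero_add_phi_quest_add_phi_one p q a b c,
      phi_zero_add_phi_quest_add_phi_one p q a' b' c', phi_zero_monotone hpq ha hb hc]
  case one =>
    simpa only [filter_ordVal_one_le, Finset.sum_singleton] using phi_one_antitone hpq ha hb hc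

end

theorem stmt15_general (p q : ℝ)
    (hpq : p + q ≤ 1) (η ηt : Config)
    (hle : ∀ x : ℤ, ordVal (η x) ≤ ordVal (ηt x)) (n : ℤ) (a : PSym) :
    ∑ b ∈ Finset.univ.filter (fun b => ordVal a ≤ ordVal b),
        phi p q (ηt n) (ηt (n + 1)) (ηt (n + 2)) b ≤
      ∑ b ∈ Finset.univ.filter (fun b => ordVal a ≤ ordVal b),
        phi p q (η n) (η (n + 1)) (η (n + 2)) b :=
  sum_phi_filter_ordVal_le_antitone hpq (hle n) (hle (n + 1)) (hle (n + 2)) a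

theorem stmt15 (p q : ℝ) (hp0 : 0 ≤ p) (hp1 : p ≤ 1) (hq0 : 0 ≤ q) (hq1 : q ≤ 1)
    (hpq : p + q ≤ 1) (η ηt : Config)
    (hle : ∀ x : ℤ, ordVal (η x) ≤ ordVal (ηt x)) (n : ℤ) (a : PSym) :
    ∑ b ∈ Finset.univ.filter (fun b => ordVal a ≤ ordVal b),
        phi p q (ηt n) (ηt (n + 1)) (ηt (n + 2)) b ≤
      ∑ b ∈ Finset.univ.filter (fun b => ordVal a ≤ ordVal b),
        phi p q (η n) (η (n + 1)) (η (n + 2)) b :=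
  stmt15_general p q hpq η ηt hle n a
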